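/- Suppose in addition that the coefficients are constant: ΦX = V is one fixed ℤ-graded R-module for all objects X and Φ₁(f) = id_V for all morphisms f. Let E(ψ) = ⊕_{k≥0} ⊕_{x} R·x ⊗ V, the sum over all k-simplices x = (X₀ ← ⋯ ← X_k) of 𝒳, graded by deg(x ⊗ v) = k + deg v, and define the twisted boundary ∂_ψ(x ⊗ v) = Σ_{i=0}^{k} (−1)^i d_i(x) ⊗ v − Σ_{p+q=k} (−1)^p f_p(x) ⊗ ψ_q(b_q(x))(v), where d_i are the simplicial face operators (d₀ and d_k drop the first, respectively last, object, and d_i for 0 < i < k replaces f_i, f_{i+1} by f_i∘f_{i+1}), f_p(x) = (X₀ ← ⋯ ← X_p) is the front p-face and b_q(x) = (X_p ← ⋯ ← X_k) is the back q-face of x. If ψ is a twisting cochain, then ∂_ψ ∘ ∂_ψ = 0, so (E(ψ), ∂_ψ) is a chain complex of R-modules. -/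

import Mathlib

open CategoryTheory Simplicial

universe u v w

/-- A `ℤ`-graded `R`-module: a module together with a family of submodules
(the grading). -/
structure GradedMod (R : Type u) [Ring R] where
  carrier : Type v
  [isAddCommGroup : AddCommGroup carrier]
  [isModule : Module R carrier]
  grading : ℤ → Submodule R carrier

attribute [instance] GradedMod.isAddCommGroup GradedMod.isModule

/-- A linear map of graded modules is homogeneous of degree `d`. -/
def HasDeg {R : Type u} [Ring R] {M N : GradedMod R} (d : ℤ)
    (f : M.carrier →ₗ[R] N.carrier) : Prop :=
  ∀ n : ℤ, ∀ x ∈ M.grading n, f x ∈ N.grading (n + d)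

variable {𝒳 : Type u} [Category.{v} 𝒳]

/-- The map on simplices of the nerve induced by a monotone map of indices. -/
def simpMap (a b : ℕ) (g : Fin (a + 1) →o Fin (b + 1)) :
    (nerve 𝒳) _⦋b⦌ → (nerve 𝒳) _⦋a⦌ :=
  (nerve 𝒳).map (SimplexCategory.mkHom g).op

/-- The front `p`-face `f_p(x) = (X₀ ← ⋯ ← X_p)` of a `k`-simplex
`x = (X₀ ← ⋯ ← X_k)` of the nerve of `𝒳` (for `p ≤ k`). -/
def frontFace (k p : ℕ) : (nerve 𝒳) _⦋k⦌ → (nerve 𝒳) _⦋p⦌ :=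
  simpMap p k
    ⟨fun j => ⟨min j.1 k, by omega⟩,
     fun a b h => by
      simp only [Fin.mk_le_mk]
      exact min_le_min h (le_refl k)⟩

/-- The back `q`-face `b_q(x) = (X_{k-q} ← ⋯ ← X_k)` of a `k`-simplex
`x = (X₀ ← ⋯ ← X_k)` of the nerve of `𝒳` (for `q ≤ k`). -/
def backFace (k q : ℕ) : (nerve 𝒳) _⦋k⦌ → (nerve 𝒳) _⦋q⦌ :=
  simpMap q k
    ⟨fun j => ⟨min (k - q + j.1) k, by omega⟩,
     fun a b h => by
      simp only [Fin.mk_le_mk]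
      exact min_le_min (Nat.add_le_add (le_refl (k - q)) h) (le_refl k)⟩

/-- The type of simplices of `𝒳` (of all dimensions). -/
abbrev Simp (𝒳 : Type u) [Category.{v} 𝒳] : Type (max u v) :=
  Σ k : ℕ, (nerve 𝒳) _⦋k⦌

variable {R : Type w} [Ring R] (V : GradedMod.{w, w} R)

/-- The simplicial part `x ⊗ v ↦ ∑ (-1)^i d_i(x) ⊗ v` of the twisted
boundary map (zero on `0`-simplices). -/
noncomputable def simplicialPart
    (s : Simp 𝒳) : V.carrier →ₗ[R] (Simp 𝒳 →₀ V.carrier) :=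
  match s with
  | ⟨0, _⟩ => 0
  | ⟨m + 1, x⟩ =>
      ∑ i : Fin (m + 2),
        ((-1 : ℤ) ^ (i : ℕ)) •
          (Finsupp.lsingle (⟨m, SimplicialObject.δ (nerve 𝒳) i x⟩ : Simp 𝒳) :
            V.carrier →ₗ[R] (Simp 𝒳 →₀ V.carrier))

/-- Brown's twisted boundary map
`∂_ψ(x ⊗ v) = ∑ (-1)^i d_i(x) ⊗ v - ∑_{p+q=k} (-1)^p f_p(x) ⊗ ψ_q(b_q(x))(v)`
on the total complex `E(ψ) = ⊕_k ⊕_x R·x ⊗ V`. -/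
noncomputable def twistedBoundary
    (ψ : ∀ p : ℕ, (nerve 𝒳) _⦋p⦌ → (V.carrier →ₗ[R] V.carrier)) :
    (Simp 𝒳 →₀ V.carrier) →ₗ[R] (Simp 𝒳 →₀ V.carrier) :=
  Finsupp.lsum ℕ fun s : Simp 𝒳 =>
    simplicialPart V s
      - ∑ p ∈ Finset.range (s.1 + 1),
          ((-1 : ℤ) ^ p) •
            ((Finsupp.lsingle (⟨p, frontFace s.1 p s.2⟩ : Simp 𝒳) :
                V.carrier →ₗ[R] (Simp 𝒳 →₀ V.carrier)).comp
              (ψ (s.1 - p) (backFace s.1 (s.1 - p) s.2)))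


/-- face map with natural-number index -/
def dN (n i : ℕ) : (nerve 𝒳) _⦋n + 1⦌ → (nerve 𝒳) _⦋n⦌ :=
  SimplicialObject.δ (nerve 𝒳) ⟨min i (n + 1), by omega⟩

theorem simpMap_comp (a b c : ℕ) (g : Fin (a + 1) →o Fin (b + 1))
    (h : Fin (b + 1) →o Fin (c + 1)) (x : (nerve 𝒳) _⦋c⦌) :
    simpMap a b g (simpMap b c h x) = simpMap a c (h.comp g) x := by
  unfold simpMap
  rw [← FunctorToTypes.map_comp_apply, ← op_comp]
  congr 1

theorem simpMap_congr (a c : ℕ) (g₁ g₂ : Fin (a + 1) →o Fin (c + 1))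
    (h : ∀ j, (g₁ j).1 = (g₂ j).1) (x : (nerve 𝒳) _⦋c⦌) :
    simpMap a c g₁ x = simpMap a c g₂ x := by
  congr 1; ext j; exact h j

theorem simpMap_id (k : ℕ) (x : (nerve 𝒳) _⦋k⦌) : simpMap k k OrderHom.id x = x := by
  unfold simpMap
  have : SimplexCategory.mkHom (OrderHom.id) = 𝟙 (⦋k⦌ : SimplexCategory) := rfl
  rw [this, op_id, FunctorToTypes.map_id_apply]

theorem dN_simpMap (n i : ℕ) (x : (nerve 𝒳) _⦋n + 1⦌) :
    dN n i x = simpMap n (n + 1)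
      ⟨fun j => (⟨min i (n+1), by omega⟩ : Fin (n+2)).succAbove j, fun _ _ h =>
          (Fin.succAboveOrderEmb _).monotone h⟩ x :=
  rfl

theorem succAbove_val (n : ℕ) (i : Fin (n + 2)) (j : Fin (n + 1)) :
    (i.succAbove j).1 = if j.1 < i.1 then j.1 else j.1 + 1 := by
  rcases Nat.lt_or_ge j.1 i.1 with h | h
  · rw [Fin.succAbove_of_castSucc_lt _ _ (by simpa [Fin.lt_def] using h)]
    simp [h]
  · rw [Fin.succAbove_of_le_castSucc _ _ (by simpa [Fin.le_def] using h)]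
    simp [Nat.not_lt.mpr h]

theorem front_front (k p r : ℕ) (hr : r ≤ p) (hp : p ≤ k) (x : (nerve 𝒳) _⦋k⦌) :
    frontFace p r (frontFace k p x) = frontFace k r x := by
  unfold frontFace
  rw [simpMap_comp]
  refine simpMap_congr _ _ _ _ (fun j => ?_) x
  have := j.2
  simp [DFunLike.coe, OrderHom.comp]; omega

theorem back_back (k q q' : ℕ) (hq' : q' ≤ q) (hq : q ≤ k) (x : (nerve 𝒳) _⦋k⦌) :
    backFace q q' (backFace k q x) = backFace k q' x := by
  unfold backFace
  rw [simpMap_comp]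
  refine simpMap_congr _ _ _ _ (fun j => ?_) x
  have := j.2
  simp [DFunLike.coe, OrderHom.comp]; omega

theorem front_self (k : ℕ) (x : (nerve 𝒳) _⦋k⦌) : frontFace k k x = x := by
  rw [← simpMap_id k x]
  exact simpMap_congr _ _ _ _ (fun j => by have := j.2; simp only [DFunLike.coe]; simp; omega) x

theorem back_self (k : ℕ) (x : (nerve 𝒳) _⦋k⦌) : backFace k k x = x := by
  rw [← simpMap_id k x]
  exact simpMap_congr _ _ _ _ (fun j => by have := j.2; simp only [DFunLike.coe]; simp; omega) x

theorem front_back (k p r : ℕ) (hr : r ≤ p) (hp : p ≤ k) (x : (nerve 𝒳) _⦋k⦌) :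
    frontFace (k - r) (p - r) (backFace k (k - r) x)
      = backFace p (p - r) (frontFace k p x) := by
  unfold frontFace backFace
  rw [simpMap_comp, simpMap_comp]
  refine simpMap_congr _ _ _ _ (fun j => ?_) x
  have := j.2
  simp [DFunLike.coe, OrderHom.comp]; omega

theorem d_front (m r i : ℕ) (hi : i ≤ r) (hr : r ≤ m) (x : (nerve 𝒳) _⦋m + 1⦌) :
    dN r i (frontFace (m + 1) (r + 1) x) = frontFace m r (dN m i x) := by
  rw [dN_simpMap, dN_simpMap]
  unfold frontFace
  rw [simpMap_comp, simpMap_comp]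
  refine simpMap_congr _ _ _ _ (fun j => ?_) x
  have := j.2
  simp [DFunLike.coe, OrderHom.comp, succAbove_val]
  split_ifs <;> omega

theorem d_last_front (m r : ℕ) (hr : r ≤ m) (x : (nerve 𝒳) _⦋m + 1⦌) :
    dN r (r + 1) (frontFace (m + 1) (r + 1) x) = frontFace (m + 1) r x := by
  rw [dN_simpMap]
  unfold frontFace
  rw [simpMap_comp]
  refine simpMap_congr _ _ _ _ (fun j => ?_) x
  have := j.2
  simp [succAbove_val]; simp only [DFunLike.coe]; simp [succAbove_val]
  split_ifs <;> omega

theorem back_d (m r i : ℕ) (hi : i ≤ r) (hr : r ≤ m) (x : (nerve 𝒳) _⦋m + 1⦌) :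
    backFace m (m - r) (dN m i x) = backFace (m + 1) (m - r) x := by
  rw [dN_simpMap]
  unfold backFace
  rw [simpMap_comp]
  refine simpMap_congr _ _ _ _ (fun j => ?_) x
  have := j.2
  simp [succAbove_val]; simp only [DFunLike.coe]; simp [succAbove_val]
  split_ifs <;> omega

theorem back_d' (m r i : ℕ) (hi : r + 1 ≤ i) (hi' : i ≤ m + 1) (hr : r ≤ m)
    (x : (nerve 𝒳) _⦋m + 1⦌) :
    backFace m (m - r) (dN m i x)
      = dN (m - r) (i - r) (backFace (m + 1) (m - r + 1) x) := by
  rw [dN_simpMap, dN_simpMap]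
  unfold backFace
  rw [simpMap_comp, simpMap_comp]
  refine simpMap_congr _ _ _ _ (fun j => ?_) x
  have := j.2
  simp [DFunLike.coe, OrderHom.comp, succAbove_val]
  split_ifs <;> omega

theorem d_zero_back (m q : ℕ) (hq : q ≤ m) (x : (nerve 𝒳) _⦋m + 1⦌) :
    dN q 0 (backFace (m + 1) (q + 1) x) = backFace (m + 1) q x := by
  rw [dN_simpMap]
  unfold backFace
  rw [simpMap_comp]
  refine simpMap_congr _ _ _ _ (fun j => ?_) x
  have := j.2
  simp [DFunLike.coe, succAbove_val]
  omega

theorem dN_eq (n : ℕ) (i : Fin (n + 2)) (y : (nerve 𝒳) _⦋n + 1⦌) :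
    SimplicialObject.δ (nerve 𝒳) i y = dN n i.1 y := by
  have h : (⟨min i.1 (n + 1), by omega⟩ : Fin (n + 2)) = i := by
    ext
    simp [Nat.min_eq_left (by omega : i.1 ≤ n + 1)]
  unfold dN
  rw [h]

theorem front_d' (m r i : ℕ) (hi : r + 1 ≤ i) (hi' : i ≤ m + 1) (hr : r ≤ m)
    (x : (nerve 𝒳) _⦋m + 1⦌) :
    frontFace m r (dN m i x) = frontFace (m + 1) r x := by
  rw [dN_simpMap]
  unfold frontFace
  rw [simpMap_comp]
  refine simpMap_congr _ _ _ _ (fun j => ?_) x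
  have := j.2
  simp [succAbove_val]; simp only [DFunLike.coe]; simp [succAbove_val]
  split_ifs <;> omega

theorem dd_comm (n i j : ℕ) (hij : i ≤ j) (hj : j ≤ n + 1) (x : (nerve 𝒳) _⦋n + 2⦌) :
    dN n j (dN (n + 1) i x) = dN n i (dN (n + 1) (j + 1) x) := by
  rw [dN_simpMap, dN_simpMap, dN_simpMap, dN_simpMap]
  rw [simpMap_comp, simpMap_comp]
  refine simpMap_congr _ _ _ _ (fun t => ?_) x
  have := t.2
  simp [DFunLike.coe, OrderHom.comp, succAbove_val]
  split_ifs <;> omega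

theorem neg_one_pow_congr_mod (a b : ℕ) (h : a % 2 = b % 2) : ((-1 : ℤ) ^ a) = (-1) ^ b := by
  rcases Nat.even_or_odd a with ha | ha
  · have hb : Even b := by
      rcases ha with ⟨t, ht⟩; exact (Nat.even_iff).2 (by omega)
    rw [ha.neg_one_pow, hb.neg_one_pow]
  · have hb : Odd b := by
      rcases ha with ⟨t, ht⟩; exact (Nat.odd_iff).2 (by omega)
    rw [ha.neg_one_pow, hb.neg_one_pow]

theorem dd_sum {A : Type*} [AddCommGroup A] (n : ℕ) (x : (nerve 𝒳) _⦋n + 2⦌)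
    (g : (nerve 𝒳) _⦋n⦌ → A) :
    ∑ i ∈ Finset.range (n + 3), ∑ j ∈ Finset.range (n + 2),
      ((-1 : ℤ) ^ (i + j)) • g (dN n j (dN (n + 1) i x)) = 0 := by
  rw [← Finset.sum_product']
  set t : ℕ × ℕ → A := fun q => ((-1 : ℤ) ^ (q.1 + q.2)) • g (dN n q.2 (dN (n + 1) q.1 x))
    with ht
  rw [← Finset.sum_filter_add_sum_filter_not _ (fun q : ℕ × ℕ => q.1 ≤ q.2)]
  have key : ∑ q ∈ (Finset.range (n + 3) ×ˢ Finset.range (n + 2)).filter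
        (fun q : ℕ × ℕ => ¬ q.1 ≤ q.2), t q
      = ∑ q ∈ (Finset.range (n + 3) ×ˢ Finset.range (n + 2)).filter
        (fun q : ℕ × ℕ => q.1 ≤ q.2), - t q := by
    refine Finset.sum_nbij' (fun q => (q.2, q.1 - 1)) (fun q => (q.2 + 1, q.1)) ?_ ?_ ?_ ?_ ?_
    · intro q hq
      simp only [Finset.mem_filter, Finset.mem_product, Finset.mem_range] at hq ⊢
      omega
    · intro q hq
      simp only [Finset.mem_filter, Finset.mem_product, Finset.mem_range] at hq ⊢
      omega
    · intro q hq
      simp only [Finset.mem_filter, Finset.mem_product, Finset.mem_range] at hq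
      ext <;> simp <;> omega
    · intro q hq
      simp only [Finset.mem_filter, Finset.mem_product, Finset.mem_range] at hq
      ext <;> simp <;> omega
    · intro q hq
      simp only [Finset.mem_filter, Finset.mem_product, Finset.mem_range] at hq
      rw [ht]
      simp only
      rw [dd_comm n q.2 (q.1 - 1) (by omega) (by omega) x]
      have h1 : q.1 - 1 + 1 = q.1 := by omega
      rw [h1]
      rw [← neg_smul]
      congr 1
      rw [neg_one_pow_congr_mod (q.2 + (q.1 - 1)) (q.1 + q.2 + 1) (by omega)]
      rw [pow_succ]
      ring
  rw [key, Finset.sum_neg_distrib]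
  abel

theorem sp_zero (y : (nerve 𝒳) _⦋0⦌) (v : V.carrier) :
    simplicialPart V (⟨0, y⟩ : Simp 𝒳) v = 0 := by
  show (0 : V.carrier →ₗ[R] (Simp 𝒳 →₀ V.carrier)) v = 0
  simp

theorem sp_apply_succ (m : ℕ) (y : (nerve 𝒳) _⦋m + 1⦌) (v : V.carrier) :
    simplicialPart V (⟨m + 1, y⟩ : Simp 𝒳) v
      = ∑ j ∈ Finset.range (m + 2),
          ((-1 : ℤ) ^ j) • Finsupp.single (⟨m, dN m j y⟩ : Simp 𝒳) v := by
  show (∑ i : Fin (m + 2), ((-1 : ℤ) ^ (i : ℕ)) •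
      (Finsupp.lsingle (⟨m, SimplicialObject.δ (nerve 𝒳) i y⟩ : Simp 𝒳) :
        V.carrier →ₗ[R] (Simp 𝒳 →₀ V.carrier))) v = _
  rw [LinearMap.sum_apply]
  have : ∀ i : Fin (m + 2), (((-1 : ℤ) ^ (i : ℕ)) •
      (Finsupp.lsingle (⟨m, SimplicialObject.δ (nerve 𝒳) i y⟩ : Simp 𝒳) :
        V.carrier →ₗ[R] (Simp 𝒳 →₀ V.carrier))) v
      = ((-1 : ℤ) ^ (i : ℕ)) • Finsupp.single (⟨m, dN m (i : ℕ) y⟩ : Simp 𝒳) v := by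
    intro i
    rw [LinearMap.smul_apply, Finsupp.lsingle_apply, dN_eq]
  rw [Finset.sum_congr rfl (fun i _ => this i)]
  exact Fin.sum_univ_eq_sum_range
    (fun j => ((-1 : ℤ) ^ j) • Finsupp.single (⟨m, dN m j y⟩ : Simp 𝒳) v) (m + 2)

theorem tb_single (ψ : ∀ p : ℕ, (nerve 𝒳) _⦋p⦌ → (V.carrier →ₗ[R] V.carrier))
    (s : Simp 𝒳) (v : V.carrier) :
    twistedBoundary V ψ (Finsupp.single s v)
      = simplicialPart V s v
        - ∑ p ∈ Finset.range (s.1 + 1),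
            ((-1 : ℤ) ^ p) • Finsupp.single (⟨p, frontFace s.1 p s.2⟩ : Simp 𝒳)
              (ψ (s.1 - p) (backFace s.1 (s.1 - p) s.2) v) := by
  unfold twistedBoundary
  rw [Finsupp.lsum_single, LinearMap.sub_apply, LinearMap.sum_apply]
  congr 1

theorem single_sum (s : Simp 𝒳) (t : Finset ℕ) (c : ℕ → ℤ) (u : ℕ → V.carrier) :
    ∑ j ∈ t, c j • Finsupp.single s (u j)
      = Finsupp.single s (∑ j ∈ t, c j • u j) := by
  have : ∀ j, c j • Finsupp.single s (u j)
      = (Finsupp.lsingle s : V.carrier →ₗ[R] (Simp 𝒳 →₀ V.carrier)) (c j • u j) := by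
    intro j
    rw [map_zsmul, Finsupp.lsingle_apply]
  rw [Finset.sum_congr rfl (fun j _ => this j), ← map_sum]
  rw [Finsupp.lsingle_apply]

theorem sp_dd (m : ℕ) (x : (nerve 𝒳) _⦋m + 1⦌) (v : V.carrier) :
    ∑ i ∈ Finset.range (m + 2),
      ((-1 : ℤ) ^ i) • simplicialPart V (⟨m, dN m i x⟩ : Simp 𝒳) v = 0 := by
  cases m with
  | zero =>
    refine Finset.sum_eq_zero (fun i _ => ?_)
    rw [sp_zero, smul_zero]
  | succ n =>
    have : ∀ i ∈ Finset.range (n + 3),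
        ((-1 : ℤ) ^ i) • simplicialPart V (⟨n + 1, dN (n + 1) i x⟩ : Simp 𝒳) v
        = ∑ j ∈ Finset.range (n + 2),
            ((-1 : ℤ) ^ (i + j)) •
              Finsupp.single (⟨n, dN n j (dN (n + 1) i x)⟩ : Simp 𝒳) v := by
      intro i _
      rw [sp_apply_succ, Finset.smul_sum]
      refine Finset.sum_congr rfl (fun j _ => ?_)
      rw [smul_smul, ← pow_add]
    rw [Finset.sum_congr rfl this]
    exact dd_sum n x (fun z => Finsupp.single (⟨n, z⟩ : Simp 𝒳) v)

section Steps
variable (ψ : ∀ p : ℕ, (nerve 𝒳) _⦋p⦌ → (V.carrier →ₗ[R] V.carrier))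

theorem stepA (m : ℕ) (x : (nerve 𝒳) _⦋m + 1⦌) (v : V.carrier) :
    twistedBoundary V ψ (simplicialPart V (⟨m + 1, x⟩ : Simp 𝒳) v)
      = (∑ i ∈ Finset.range (m + 2),
            ((-1 : ℤ) ^ i) • simplicialPart V (⟨m, dN m i x⟩ : Simp 𝒳) v)
        - ∑ i ∈ Finset.range (m + 2), ∑ r ∈ Finset.range (m + 1),
            ((-1 : ℤ) ^ (i + r)) •
              Finsupp.single (⟨r, frontFace m r (dN m i x)⟩ : Simp 𝒳)
                (ψ (m - r) (backFace m (m - r) (dN m i x)) v) := by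
  rw [sp_apply_succ, map_sum, ← Finset.sum_sub_distrib]
  refine Finset.sum_congr rfl fun i _ => ?_
  rw [map_zsmul, tb_single, smul_sub]
  dsimp only
  congr 1
  rw [Finset.smul_sum]
  refine Finset.sum_congr rfl fun r _ => ?_
  rw [smul_smul, ← pow_add]

theorem stepB (m : ℕ) (x : (nerve 𝒳) _⦋m + 1⦌) (v : V.carrier) :
    (∑ i ∈ Finset.range (m + 2), ∑ r ∈ Finset.range (m + 1),
        ((-1 : ℤ) ^ (i + r)) •
          Finsupp.single (⟨r, frontFace m r (dN m i x)⟩ : Simp 𝒳)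
            (ψ (m - r) (backFace m (m - r) (dN m i x)) v))
      = (∑ r ∈ Finset.range (m + 1), ∑ i ∈ Finset.range (r + 1),
          ((-1 : ℤ) ^ (i + r)) •
            Finsupp.single (⟨r, dN r i (frontFace (m + 1) (r + 1) x)⟩ : Simp 𝒳)
              (ψ (m - r) (backFace (m + 1) (m - r) x) v))
        + ∑ r ∈ Finset.range (m + 1), ∑ i ∈ Finset.Ico (r + 1) (m + 2),
            ((-1 : ℤ) ^ (i + r)) •
              Finsupp.single (⟨r, frontFace (m + 1) r x⟩ : Simp 𝒳)
                (ψ (m - r) (dN (m - r) (i - r) (backFace (m + 1) (m - r + 1) x)) v) := by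
  rw [Finset.sum_comm, ← Finset.sum_add_distrib]
  refine Finset.sum_congr rfl fun r hr => ?_
  have hr' : r ≤ m := by
    have := Finset.mem_range.mp hr; omega
  have split : ∑ i ∈ Finset.range (m + 2),
      ((-1 : ℤ) ^ (i + r)) •
        Finsupp.single (⟨r, frontFace m r (dN m i x)⟩ : Simp 𝒳)
          (ψ (m - r) (backFace m (m - r) (dN m i x)) v)
      = (∑ i ∈ Finset.range (r + 1),
          ((-1 : ℤ) ^ (i + r)) •
            Finsupp.single (⟨r, frontFace m r (dN m i x)⟩ : Simp 𝒳)
              (ψ (m - r) (backFace m (m - r) (dN m i x)) v))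
        + ∑ i ∈ Finset.Ico (r + 1) (m + 2),
            ((-1 : ℤ) ^ (i + r)) •
              Finsupp.single (⟨r, frontFace m r (dN m i x)⟩ : Simp 𝒳)
                (ψ (m - r) (backFace m (m - r) (dN m i x)) v) := by
    simp only [Finset.range_eq_Ico]
    rw [Finset.sum_Ico_consecutive _ (Nat.zero_le (r + 1)) (by omega : r + 1 ≤ m + 2)]
  rw [split]
  congr 1
  · refine Finset.sum_congr rfl fun i hi => ?_
    have hi' : i ≤ r := by
      have := Finset.mem_range.mp hi; omega
    rw [← d_front m r i hi' hr', back_d m r i hi' hr']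
  · refine Finset.sum_congr rfl fun i hi => ?_
    obtain ⟨h1, h2⟩ := Finset.mem_Ico.mp hi
    rw [front_d' m r i h1 (by omega) hr', back_d' m r i h1 (by omega) hr']

theorem stepC (m : ℕ) (x : (nerve 𝒳) _⦋m + 1⦌) (v : V.carrier) :
    (∑ p ∈ Finset.range (m + 2),
        ((-1 : ℤ) ^ p) • simplicialPart V (⟨p, frontFace (m + 1) p x⟩ : Simp 𝒳)
          (ψ (m + 1 - p) (backFace (m + 1) (m + 1 - p) x) v))
      = (∑ r ∈ Finset.range (m + 1), ∑ j ∈ Finset.range (r + 1),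
          ((-1 : ℤ) ^ (r + 1 + j)) •
            Finsupp.single (⟨r, dN r j (frontFace (m + 1) (r + 1) x)⟩ : Simp 𝒳)
              (ψ (m - r) (backFace (m + 1) (m - r) x) v))
        + ∑ r ∈ Finset.range (m + 1),
            Finsupp.single (⟨r, frontFace (m + 1) r x⟩ : Simp 𝒳)
              (ψ (m - r) (backFace (m + 1) (m - r) x) v) := by
  rw [Finset.sum_range_succ']
  have h0 : ((-1 : ℤ) ^ 0) • simplicialPart V (⟨0, frontFace (m + 1) 0 x⟩ : Simp 𝒳)
      (ψ (m + 1 - 0) (backFace (m + 1) (m + 1 - 0) x) v) = 0 := by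
    rw [sp_zero, smul_zero]
  rw [h0, add_zero, ← Finset.sum_add_distrib]
  refine Finset.sum_congr rfl fun r hr => ?_
  have hr' : r ≤ m := by have := Finset.mem_range.mp hr; omega
  have hsub : m + 1 - (r + 1) = m - r := by omega
  rw [hsub, sp_apply_succ, Finset.smul_sum, Finset.sum_range_succ]
  congr 1
  · refine Finset.sum_congr rfl fun j hj => ?_
    rw [smul_smul, ← pow_add]
  · rw [d_last_front m r hr', smul_smul, ← pow_add,
      neg_one_pow_congr_mod (r + 1 + (r + 1)) 0 (by omega), pow_zero, one_smul]

theorem stepD (m : ℕ) (x : (nerve 𝒳) _⦋m + 1⦌) (v : V.carrier) :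
    (∑ r ∈ Finset.range (m + 1), ∑ i ∈ Finset.range (r + 1),
        ((-1 : ℤ) ^ (i + r)) •
          Finsupp.single (⟨r, dN r i (frontFace (m + 1) (r + 1) x)⟩ : Simp 𝒳)
            (ψ (m - r) (backFace (m + 1) (m - r) x) v))
      + (∑ r ∈ Finset.range (m + 1), ∑ j ∈ Finset.range (r + 1),
          ((-1 : ℤ) ^ (r + 1 + j)) •
            Finsupp.single (⟨r, dN r j (frontFace (m + 1) (r + 1) x)⟩ : Simp 𝒳)
              (ψ (m - r) (backFace (m + 1) (m - r) x) v)) = 0 := by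
  rw [← Finset.sum_add_distrib]
  refine Finset.sum_eq_zero fun r _ => ?_
  rw [← Finset.sum_add_distrib]
  refine Finset.sum_eq_zero fun i _ => ?_
  rw [← add_smul]
  have : ((-1 : ℤ) ^ (i + r) + (-1 : ℤ) ^ (r + 1 + i)) = 0 := by
    rw [neg_one_pow_congr_mod (r + 1 + i) (i + r + 1) (by omega), pow_succ]
    ring
  rw [this, zero_smul]

theorem stepE
    (hrel : ∀ (m : ℕ) (x : (nerve 𝒳) _⦋m + 1⦌),
      ∑ i : Fin (m + 2),
          ((-1 : ℤ) ^ (i : ℕ)) • ψ m (SimplicialObject.δ (nerve 𝒳) i x)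
        = ∑ p ∈ Finset.range (m + 2),
            ((-1 : ℤ) ^ p) •
              ((ψ p (frontFace (m + 1) p x)).comp
                (ψ (m + 1 - p) (backFace (m + 1) (m + 1 - p) x))))
    (m : ℕ) (x : (nerve 𝒳) _⦋m + 1⦌) (v : V.carrier) :
    (∑ r ∈ Finset.range (m + 1), ∑ i ∈ Finset.Ico (r + 1) (m + 2),
        ((-1 : ℤ) ^ (i + r)) •
          Finsupp.single (⟨r, frontFace (m + 1) r x⟩ : Simp 𝒳)
            (ψ (m - r) (dN (m - r) (i - r) (backFace (m + 1) (m - r + 1) x)) v))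
      = (∑ r ∈ Finset.range (m + 1), ∑ a ∈ Finset.range (m - r + 2),
          ((-1 : ℤ) ^ a) •
            Finsupp.single (⟨r, frontFace (m + 1) r x⟩ : Simp 𝒳)
              (ψ a (frontFace (m - r + 1) a (backFace (m + 1) (m - r + 1) x))
                (ψ (m - r + 1 - a)
                  (backFace (m - r + 1) (m - r + 1 - a) (backFace (m + 1) (m - r + 1) x)) v)))
        - ∑ r ∈ Finset.range (m + 1),
            Finsupp.single (⟨r, frontFace (m + 1) r x⟩ : Simp 𝒳)
              (ψ (m - r) (backFace (m + 1) (m - r) x) v) := by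
  rw [← Finset.sum_sub_distrib]
  refine Finset.sum_congr rfl fun r hr => ?_
  have hr' : r ≤ m := by have := Finset.mem_range.mp hr; omega
  set y : (nerve 𝒳) _⦋m - r + 1⦌ := backFace (m + 1) (m - r + 1) x with hy
  set u : ℕ → V.carrier := fun t => ψ (m - r) (dN (m - r) t y) v with hu
  set s : Simp 𝒳 := (⟨r, frontFace (m + 1) r x⟩ : Simp 𝒳) with hs
  -- pointwise hrel
  have hp : ∑ i ∈ Finset.range (m - r + 2), ((-1 : ℤ) ^ i) • u i
      = ∑ a ∈ Finset.range (m - r + 2),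
          ((-1 : ℤ) ^ a) •
            ψ a (frontFace (m - r + 1) a y)
              (ψ (m - r + 1 - a) (backFace (m - r + 1) (m - r + 1 - a) y) v) := by
    have h := LinearMap.congr_fun (hrel (m - r) y) v
    rw [LinearMap.sum_apply, LinearMap.sum_apply] at h
    simp only [LinearMap.smul_apply, LinearMap.comp_apply] at h
    rw [← h, ← Fin.sum_univ_eq_sum_range (fun i => ((-1 : ℤ) ^ i) • u i) (m - r + 2)]
    refine Finset.sum_congr rfl fun i _ => ?_
    rw [hu]
    simp only
    rw [dN_eq]
  -- rewrite the Ico sum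
  rw [Finset.sum_Ico_eq_sum_range]
  have e1 : m + 2 - (r + 1) = m - r + 1 := by omega
  rw [e1]
  have e2 : ∀ j ∈ Finset.range (m - r + 1),
      ((-1 : ℤ) ^ (r + 1 + j + r)) •
        Finsupp.single s (ψ (m - r) (dN (m - r) (r + 1 + j - r) y) v)
      = ((-1 : ℤ) ^ (j + 1)) • Finsupp.single s (u (j + 1)) := by
    intro j _
    have e3 : r + 1 + j - r = j + 1 := by omega
    rw [e3, neg_one_pow_congr_mod (r + 1 + j + r) (j + 1) (by omega), hu]
  rw [Finset.sum_congr rfl e2]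
  -- relate to the full alternating sum
  have e4 : ∑ i ∈ Finset.range (m - r + 2), ((-1 : ℤ) ^ i) • Finsupp.single s (u i)
      = (∑ j ∈ Finset.range (m - r + 1),
          ((-1 : ℤ) ^ (j + 1)) • Finsupp.single s (u (j + 1)))
        + Finsupp.single s (u 0) := by
    rw [Finset.sum_range_succ']
    congr 1
    rw [pow_zero, one_smul]
  have e5 : ∑ i ∈ Finset.range (m - r + 2), ((-1 : ℤ) ^ i) • Finsupp.single s (u i)
      = ∑ a ∈ Finset.range (m - r + 2),
          ((-1 : ℤ) ^ a) •
            Finsupp.single s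
              (ψ a (frontFace (m - r + 1) a y)
                (ψ (m - r + 1 - a) (backFace (m - r + 1) (m - r + 1 - a) y) v)) := by
    rw [single_sum, single_sum, hp]
  have e6 : u 0 = ψ (m - r) (backFace (m + 1) (m - r) x) v := by
    rw [hu]
    simp only
    rw [hy, d_zero_back m (m - r) (by omega)]
  have := e4.symm.trans e5
  -- LHS of goal equals ∑ - single s (u 0)
  have e7 : ∑ j ∈ Finset.range (m - r + 1),
      ((-1 : ℤ) ^ (j + 1)) • Finsupp.single s (u (j + 1))
      = (∑ a ∈ Finset.range (m - r + 2),
          ((-1 : ℤ) ^ a) •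
            Finsupp.single s
              (ψ a (frontFace (m - r + 1) a y)
                (ψ (m - r + 1 - a) (backFace (m - r + 1) (m - r + 1 - a) y) v)))
        - Finsupp.single s (u 0) := by
    rw [← e5, e4]
    abel
  rw [e7, e6]

theorem tri_swap {A : Type*} [AddCommMonoid A] (n : ℕ) (g : ℕ → ℕ → A) :
    ∑ p ∈ Finset.range (n + 1), ∑ r ∈ Finset.range (p + 1), g p r
      = ∑ r ∈ Finset.range (n + 1), ∑ p ∈ Finset.Ico r (n + 1), g p r := by
  simp only [Finset.range_eq_Ico]
  exact (Finset.sum_Ico_Ico_comm 0 (n + 1) (fun r p => g p r)).symm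

theorem stepF
    (hzero : ∀ x : (nerve 𝒳) _⦋0⦌, (ψ 0 x).comp (ψ 0 x) = 0)
    (m : ℕ) (x : (nerve 𝒳) _⦋m + 1⦌) (v : V.carrier) :
    (∑ p ∈ Finset.range (m + 2), ∑ r ∈ Finset.range (p + 1),
        ((-1 : ℤ) ^ (p + r)) •
          Finsupp.single (⟨r, frontFace p r (frontFace (m + 1) p x)⟩ : Simp 𝒳)
            (ψ (p - r) (backFace p (p - r) (frontFace (m + 1) p x))
              (ψ (m + 1 - p) (backFace (m + 1) (m + 1 - p) x) v)))
      = ∑ r ∈ Finset.range (m + 1), ∑ a ∈ Finset.range (m - r + 2),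
          ((-1 : ℤ) ^ a) •
            Finsupp.single (⟨r, frontFace (m + 1) r x⟩ : Simp 𝒳)
              (ψ a (frontFace (m - r + 1) a (backFace (m + 1) (m - r + 1) x))
                (ψ (m - r + 1 - a)
                  (backFace (m - r + 1) (m - r + 1 - a) (backFace (m + 1) (m - r + 1) x)) v)) := by
  have step1 : ∀ p ∈ Finset.range (m + 2), ∀ r ∈ Finset.range (p + 1),
      ((-1 : ℤ) ^ (p + r)) •
        Finsupp.single (⟨r, frontFace p r (frontFace (m + 1) p x)⟩ : Simp 𝒳)
          (ψ (p - r) (backFace p (p - r) (frontFace (m + 1) p x))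
            (ψ (m + 1 - p) (backFace (m + 1) (m + 1 - p) x) v))
      = ((-1 : ℤ) ^ (p + r)) •
        Finsupp.single (⟨r, frontFace (m + 1) r x⟩ : Simp 𝒳)
          (ψ (p - r) (backFace p (p - r) (frontFace (m + 1) p x))
            (ψ (m + 1 - p) (backFace (m + 1) (m + 1 - p) x) v)) := by
    intro p hp r hr
    have hp' := Finset.mem_range.mp hp
    have hr' := Finset.mem_range.mp hr
    rw [front_front (m + 1) p r (by omega) (by omega)]
  rw [Finset.sum_congr rfl (fun p hp => Finset.sum_congr rfl (fun r hr => step1 p hp r hr))]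
  rw [tri_swap (m + 1) (fun p r =>
    ((-1 : ℤ) ^ (p + r)) •
      Finsupp.single (⟨r, frontFace (m + 1) r x⟩ : Simp 𝒳)
        (ψ (p - r) (backFace p (p - r) (frontFace (m + 1) p x))
          (ψ (m + 1 - p) (backFace (m + 1) (m + 1 - p) x) v)))]
  rw [Finset.sum_range_succ]
  -- the r = m + 1 term vanishes by hzero
  have hsingle : Finset.Ico (m + 1) (m + 2) = {m + 1} := by
    rw [show m + 2 = (m + 1) + 1 from rfl, Nat.Ico_succ_singleton]
  have hlast : ∑ p ∈ Finset.Ico (m + 1) (m + 2),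
      ((-1 : ℤ) ^ (p + (m + 1))) •
        Finsupp.single (⟨m + 1, frontFace (m + 1) (m + 1) x⟩ : Simp 𝒳)
          (ψ (p - (m + 1)) (backFace p (p - (m + 1)) (frontFace (m + 1) p x))
            (ψ (m + 1 - p) (backFace (m + 1) (m + 1 - p) x) v)) = 0 := by
    rw [hsingle, Finset.sum_singleton, Nat.sub_self, front_self]
    have hz := LinearMap.congr_fun (hzero (backFace (m + 1) 0 x)) v
    rw [LinearMap.comp_apply, LinearMap.zero_apply] at hz
    rw [hz, Finsupp.single_zero, smul_zero]
  rw [hlast, add_zero]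
  refine Finset.sum_congr rfl fun r hr => ?_
  have hr' : r ≤ m := by have := Finset.mem_range.mp hr; omega
  rw [Finset.sum_Ico_eq_sum_range]
  have e1 : m + 1 + 1 - r = m - r + 2 := by omega
  rw [e1]
  refine Finset.sum_congr rfl fun a ha => ?_
  have ha' : a ≤ m - r + 1 := by have := Finset.mem_range.mp ha; omega
  rw [← front_back (m + 1) (r + a) r (by omega) (by omega)]
  rw [Nat.add_sub_cancel_left]
  have e2 : m + 1 - r = m - r + 1 := by omega
  rw [e2]
  have e3 : m + 1 - (r + a) = m - r + 1 - a := by omega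
  rw [e3]
  rw [← back_back (m + 1) (m - r + 1) (m - r + 1 - a) (by omega) (by omega)]
  rw [neg_one_pow_congr_mod (r + a + r) a (by omega)]

theorem stepG (m : ℕ) (x : (nerve 𝒳) _⦋m + 1⦌) (v : V.carrier) :
    twistedBoundary V ψ
      (∑ p ∈ Finset.range (m + 2),
        ((-1 : ℤ) ^ p) •
          Finsupp.single (⟨p, frontFace (m + 1) p x⟩ : Simp 𝒳)
            (ψ (m + 1 - p) (backFace (m + 1) (m + 1 - p) x) v))
      = (∑ p ∈ Finset.range (m + 2),
          ((-1 : ℤ) ^ p) • simplicialPart V (⟨p, frontFace (m + 1) p x⟩ : Simp 𝒳)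
            (ψ (m + 1 - p) (backFace (m + 1) (m + 1 - p) x) v))
        - ∑ p ∈ Finset.range (m + 2), ∑ r ∈ Finset.range (p + 1),
            ((-1 : ℤ) ^ (p + r)) •
              Finsupp.single (⟨r, frontFace p r (frontFace (m + 1) p x)⟩ : Simp 𝒳)
                (ψ (p - r) (backFace p (p - r) (frontFace (m + 1) p x))
                  (ψ (m + 1 - p) (backFace (m + 1) (m + 1 - p) x) v)) := by
  rw [map_sum, ← Finset.sum_sub_distrib]
  refine Finset.sum_congr rfl fun p _ => ?_
  rw [map_zsmul, tb_single, smul_sub]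
  dsimp only
  congr 1
  rw [Finset.smul_sum]
  refine Finset.sum_congr rfl fun r _ => ?_
  rw [smul_smul, ← pow_add]
end Steps

/-- Suppose the coefficients are constant: `ΦX = V` is one
fixed ℤ-graded `R`-module and `Φ₁(f) = id`.  If `ψ` is a twisting cochain
(`δψ = ψ ∪' ψ`, written out degreewise below), then the twisted boundary
`∂_ψ` on the total complex `E(ψ) = ⊕_{k ≥ 0} ⊕_{x} R·x ⊗ V` satisfies
`∂_ψ ∘ ∂_ψ = 0`, so `(E(ψ), ∂_ψ)` is a chain complex of `R`-modules. -/
theorem statement3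
    (ψ : ∀ p : ℕ, (nerve 𝒳) _⦋p⦌ → (V.carrier →ₗ[R] V.carrier))
    (hdeg : ∀ (p : ℕ) (x : (nerve 𝒳) _⦋p⦌), HasDeg ((p : ℤ) - 1) (ψ p x))
    (hzero : ∀ x : (nerve 𝒳) _⦋0⦌, (ψ 0 x).comp (ψ 0 x) = 0)
    (hrel : ∀ (m : ℕ) (x : (nerve 𝒳) _⦋m + 1⦌),
      ∑ i : Fin (m + 2),
          ((-1 : ℤ) ^ (i : ℕ)) • ψ m (SimplicialObject.δ (nerve 𝒳) i x)
        = ∑ p ∈ Finset.range (m + 2),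
            ((-1 : ℤ) ^ p) •
              ((ψ p (frontFace (m + 1) p x)).comp
                (ψ (m + 1 - p) (backFace (m + 1) (m + 1 - p) x)))) :
    (twistedBoundary V ψ).comp (twistedBoundary V ψ) = 0 := by
  apply Finsupp.lhom_ext
  intro s v
  rw [LinearMap.comp_apply, LinearMap.zero_apply]
  obtain ⟨k, x⟩ := s
  rw [tb_single]
  dsimp only
  rw [map_sub]
  cases k with
  | zero =>
    rw [sp_zero, map_zero]
    rw [Finset.sum_range_one, pow_zero, one_smul, Nat.sub_self, front_self, back_self]
    rw [tb_single]
    dsimp only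
    rw [sp_zero, Finset.sum_range_one, pow_zero, one_smul, Nat.sub_self,
      front_self, back_self]
    have hz := LinearMap.congr_fun (hzero x) v
    rw [LinearMap.comp_apply, LinearMap.zero_apply] at hz
    rw [hz, Finsupp.single_zero]
    abel
  | succ m =>
    rw [stepA V ψ m x v, sp_dd, stepB V ψ m x v, stepE V ψ hrel m x v,
      stepG V ψ m x v, stepC V ψ m x v, stepF V ψ hzero m x v]
    have h5 := stepD V ψ m x v
    rw [eq_neg_of_add_eq_zero_right h5]
    abel
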